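/- With a ≥ 0 integrable on [s,t], α(u,s) = ∫_s^u a, κ, ε > 0, g(t,u) = e^{−κα(t,u)/ε}/√(1−e^{−2κα(t,u)/ε}), and φ = e^{−κα(t,s)/ε} ∈ (0,1): ∫_s^t (a(u)/ε) e^{−κα(u,s)/ε} g(t,u) du ≤ (φ/κ) log(2/φ) ≤ (1/κ + α(t,s)/ε) e^{−κα(t,s)/ε}. -/

import Mathlib

/-! Pushed forward by the primitive `u ↦ α(u,s)`, the measure `a(u) du` on `(s,t]` becomes
Lebesgue measure on `(0, α(t,s)]`, so the integral equals
`(φ/ε) ∫₀^{α(t,s)} (1 - e^{-2κw/ε})^{-1/2} dw`. With `x = √(1 - e^{-2κw/ε})` an antiderivative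
is `(ε/2κ) log((1+x)/(1-x))`, and at the upper endpoint `(1+x)/(1-x) = (1+x)²/φ² ≤ 4/φ²`.
The second inequality is `log 2 ≤ 1`. -/

open Real MeasureTheory Set

lemma exists_Icc_inter_preimage_Iic_eq {α β : Type*} [ConditionallyCompleteLinearOrder α]
    [TopologicalSpace α] [OrderTopology α] [DenselyOrdered α] [LinearOrder β]
    [TopologicalSpace β] [OrderClosedTopology β] {f : α → β} {s t : α} {v : β} (hst : s ≤ t)
    (hf : ContinuousOn f (Icc s t)) (hmono : MonotoneOn f (Icc s t)) (hv : f s ≤ v) :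
    ∃ w ∈ Icc s t, Icc s t ∩ f ⁻¹' Iic v = Icc s w ∧ f w = min v (f t) := by
  set S := Icc s t ∩ f ⁻¹' Iic v
  have hbdd : BddAbove S := ⟨t, fun u hu => hu.1.2⟩
  have hwS : sSup S ∈ S :=
    (hf.preimage_isClosed_of_isClosed isClosed_Icc isClosed_Iic).csSup_mem
      ⟨s, left_mem_Icc.2 hst, hv⟩ hbdd
  have ht : t ∈ Icc s t := right_mem_Icc.2 hst
  refine ⟨sSup S, hwS.1, ?_, le_antisymm (le_min hwS.2 (hmono hwS.1 ht hwS.1.2)) ?_⟩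
  · ext u
    refine ⟨fun hu => ⟨hu.1.1, le_csSup hbdd hu⟩, fun hu => ?_⟩
    have hu' : u ∈ Icc s t := ⟨hu.1, hu.2.trans hwS.1.2⟩
    exact ⟨hu', (hmono hu' hwS.1 hu.2).trans hwS.2⟩
  rcases le_total (f t) v with htv | hvt
  · exact (min_le_right _ _).trans (hmono ht hwS.1 (le_csSup hbdd ⟨ht, htv⟩))
  · obtain ⟨u, hu, hfu⟩ := intermediate_value_Icc hst hf ⟨hv, hvt⟩
    have huS : u ∈ S := ⟨hu, hfu.le⟩
    exact (min_le_left _ _).trans (hfu ▸ hmono hu hwS.1 (le_csSup hbdd huS))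

section Primitive

variable {a : ℝ → ℝ} {s t : ℝ}

lemma aemeasurable_primitive (hint : IntervalIntegrable a volume s t) :
    AEMeasurable (fun u => ∫ r in s..u, a r) (volume.restrict (Ioc s t)) :=
  ((intervalIntegral.continuousOn_primitive_interval' hint left_mem_uIcc).aemeasurable
    measurableSet_uIcc).mono_measure
      (Measure.restrict_mono (Ioc_subset_Icc_self.trans Icc_subset_uIcc) le_rfl)

lemma monotoneOn_primitive (ha : 0 ≤ᵐ[volume.restrict (Ioc s t)] a)
    (hint : IntervalIntegrable a volume s t) :
    MonotoneOn (fun u => ∫ r in s..u, a r) (Icc s t) := by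
  intro x hx y hy hxy
  have hsub : ∀ {z}, z ∈ Icc s t → IntervalIntegrable a volume s z := fun hz =>
    hint.mono_set (uIcc_subset_uIcc left_mem_uIcc (mem_uIcc_of_le hz.1 hz.2))
  rw [← sub_nonneg, intervalIntegral.integral_interval_sub_left (hsub hy) (hsub hx),
    intervalIntegral.integral_of_le hxy]
  exact setIntegral_nonneg_of_ae_restrict
    (ae_restrict_of_ae_restrict_of_subset (Ioc_subset_Ioc hx.1 hy.2) ha)

theorem map_withDensity_primitive (hst : s ≤ t) (ha : 0 ≤ᵐ[volume.restrict (Ioc s t)] a)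
    (hint : IntervalIntegrable a volume s t) :
    ((volume.restrict (Ioc s t)).withDensity fun u => ENNReal.ofReal (a u)).map
      (fun u => ∫ r in s..u, a r) = volume.restrict (Ioc 0 (∫ r in s..t, a r)) := by
  set A : ℝ → ℝ := fun u => ∫ r in s..u, a r
  have hcont : ContinuousOn A (Icc s t) := by
    simpa [uIcc_of_le hst] using
      intervalIntegral.continuousOn_primitive_interval' hint left_mem_uIcc
  have hmono : MonotoneOn A (Icc s t) := monotoneOn_primitive ha hint
  have hA0 : A s = 0 := intervalIntegral.integral_same
  refine (Measure.ext_of_Iic _ _ fun v => ?_).symm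
  rw [Measure.map_apply_of_aemeasurable
      ((aemeasurable_primitive hint).mono_ac (withDensity_absolutelyContinuous _ _))
      measurableSet_Iic,
    withDensity_apply', Measure.restrict_apply measurableSet_Iic,
    Measure.restrict_restrict' measurableSet_Ioc]
  rcases lt_or_ge v 0 with hv | hv
  · have hIoc0 : Iic v ∩ Ioc 0 (A t) = ∅ := by
      ext u; simp only [mem_inter_iff, mem_Iic, mem_Ioc, mem_empty_iff_false, iff_false]
      intro h; linarith [h.1, h.2.1]
    have hIocs : A ⁻¹' Iic v ∩ Ioc s t = ∅ := by
      ext u; simp only [mem_inter_iff, mem_preimage, mem_Iic, mem_Ioc, mem_empty_iff_false,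
        iff_false]
      intro h
      linarith [hA0 ▸ hmono (left_mem_Icc.2 hst) ⟨h.2.1.le, h.2.2⟩ h.2.1.le]
    rw [hIoc0, hIocs, measure_empty, Measure.restrict_empty, lintegral_zero_measure]
  obtain ⟨w, hw, hpre, hAw⟩ := exists_Icc_inter_preimage_Iic_eq hst hcont hmono (hA0 ▸ hv)
  have hIoc0 : Iic v ∩ Ioc 0 (A t) = Ioc 0 (min v (A t)) := by
    ext u; simp only [mem_inter_iff, mem_Iic, mem_Ioc, le_min_iff]; tauto
  have hIocs : A ⁻¹' Iic v ∩ Ioc s t = Ioc s w := by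
    have := Set.ext_iff.1 hpre
    ext u; simp only [mem_inter_iff, mem_Icc, mem_preimage, mem_Iic, mem_Ioc] at this ⊢
    grind [hw.2]
  rw [hIoc0, hIocs, Real.volume_Ioc, sub_zero, ← hAw, ← ofReal_integral_eq_lintegral_ofReal
    ((intervalIntegrable_iff_integrableOn_Ioc_of_le hw.1).1
      (hint.mono_set (uIcc_subset_uIcc left_mem_uIcc (mem_uIcc_of_le hw.1 hw.2))))
    (ae_restrict_of_ae_restrict_of_subset (Ioc_subset_Ioc_right hw.2) ha)]
  exact congrArg ENNReal.ofReal (intervalIntegral.integral_of_le hw.1)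

theorem integral_mul_comp_primitive (hst : s ≤ t) (ha : 0 ≤ᵐ[volume.restrict (Ioc s t)] a)
    (hint : IntervalIntegrable a volume s t) {G : ℝ → ℝ}
    (hG : AEStronglyMeasurable G (volume.restrict (Ioc 0 (∫ r in s..t, a r)))) :
    ∫ u in s..t, a u * G (∫ r in s..u, a r) = ∫ v in 0..∫ r in s..t, a r, G v := by
  have hB : 0 ≤ ∫ r in s..t, a r := by
    rw [intervalIntegral.integral_of_le hst]; exact setIntegral_nonneg_of_ae_restrict ha
  have hmap := map_withDensity_primitive hst ha hint
  have hdens : (fun u => ENNReal.ofReal (a u)) = fun u => ((a u).toNNReal : ENNReal) := rfl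
  rw [intervalIntegral.integral_of_le hst, intervalIntegral.integral_of_le hB, ← hmap,
    integral_map ((aemeasurable_primitive hint).mono_ac (withDensity_absolutelyContinuous _ _))
      (hmap ▸ hG),
    hdens, integral_withDensity_eq_integral_smul₀
      hint.1.aestronglyMeasurable.aemeasurable.real_toNNReal]
  refine integral_congr_ae ?_
  filter_upwards [ha] with u hu
  rw [NNReal.smul_def, smul_eq_mul, Real.coe_toNNReal _ hu]

end Primitive

lemma integral_inv_sqrt_one_sub_exp_neg {c B : ℝ} (hc : 0 < c) (hB : 0 ≤ B) :
    ∫ w in 0..B, (√(1 - exp (-(c * w))))⁻¹ =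
      (log (1 + √(1 - exp (-(c * B)))) - log (1 - √(1 - exp (-(c * B))))) / c := by
  set X : ℝ → ℝ := fun w => √(1 - exp (-(c * w)))
  have hX1 : ∀ w, X w < 1 := fun w =>
    (sqrt_lt' one_pos).2 (by linarith [exp_pos (-(c * w))])
  have hcont : Continuous fun w => (log (1 + X w) - log (1 - X w)) / c := by
    have hX : Continuous X := by fun_prop
    refine (((hX.const_add 1).log fun w => ?_).sub
      ((continuous_const.sub hX).log fun w => (sub_pos.2 (hX1 w)).ne')).div_const c
    exact (add_pos_of_pos_of_nonneg one_pos (sqrt_nonneg _)).ne'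
  have hderiv : ∀ w ∈ Ioo 0 B,
      HasDerivAt (fun w => (log (1 + X w) - log (1 - X w)) / c) (X w)⁻¹ w := by
    intro w hw
    show HasDerivAt _ (√(1 - exp (-(c * w))))⁻¹ w
    have he : exp (-(c * w)) < 1 := exp_lt_one_iff.2 (by nlinarith [hw.1])
    have hpos : 0 < 1 - exp (-(c * w)) := by linarith
    have hin : HasDerivAt (fun w => 1 - exp (-(c * w))) (c * exp (-(c * w))) w := by
      simpa [mul_comm] using (((hasDerivAt_id w).const_mul c).neg.exp.const_sub 1)
    have hXd := hin.sqrt hpos.ne'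
    have h1 := (hXd.const_add 1).log (by positivity)
    have h2 := (hXd.const_sub 1).log (by linarith [hX1 w])
    refine ((h1.sub h2).div_const c).congr_deriv ?_
    have hX1w : √(1 - exp (-(c * w))) < 1 := hX1 w
    have hXsq : √(1 - exp (-(c * w))) ^ 2 = 1 - exp (-(c * w)) := sq_sqrt hpos.le
    have hXpos : 0 < √(1 - exp (-(c * w))) := sqrt_pos.2 hpos
    set y := √(1 - exp (-(c * w)))
    have h1y : 1 - y ≠ 0 := by linarith
    field_simp
    linear_combination 2 * hXsq
  rw [intervalIntegral.integral_eq_sub_of_hasDerivAt_of_le hB hcont.continuousOn hderiv]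
  · simp [X]
  · refine intervalIntegral.intervalIntegrable_deriv_of_nonneg hcont.continuousOn ?_
      fun w _ => inv_nonneg.2 (sqrt_nonneg _)
    simpa [hB] using hderiv

lemma log_one_add_sub_log_one_sub_le {x φ : ℝ} (hφ : 0 < φ) (hx : 0 ≤ x)
    (hxφ : x ^ 2 = 1 - φ ^ 2) : log (1 + x) - log (1 - x) ≤ 2 * log (2 / φ) := by
  have hx1 : x < 1 := by nlinarith
  rw [← log_div (by linarith) (by linarith),
    show 2 * log (2 / φ) = log ((2 / φ) ^ 2) by rw [log_pow]; norm_num]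
  refine log_le_log (by apply div_pos <;> linarith) ?_
  rw [div_pow, div_le_div_iff₀ (by linarith) (by positivity)]
  nlinarith

lemma exp_div_mul_log_two_div_exp_le {κ : ℝ} (hκ : 0 < κ) (B ε : ℝ) :
    exp (-κ * B / ε) / κ * log (2 / exp (-κ * B / ε)) ≤ (1 / κ + B / ε) * exp (-κ * B / ε) := by
  have hlog2 : log 2 ≤ 1 := by linarith [log_two_lt_d9]
  rw [log_div two_ne_zero (exp_pos _).ne', log_exp]
  calc exp (-κ * B / ε) / κ * (log 2 - -κ * B / ε)
      ≤ exp (-κ * B / ε) / κ * (1 - -κ * B / ε) := by gcongr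
    _ = (1 / κ + B / ε) * exp (-κ * B / ε) := by field_simp; ring

lemma integral_exp_div_mul_inv_sqrt_le {κ ε B : ℝ} (hκ : 0 < κ) (hε : 0 < ε) (hB : 0 ≤ B) :
    ∫ v in 0..B, exp (-κ * B / ε) / ε * (√(1 - exp (-(2 * κ / ε * (B - v)))))⁻¹ ≤
      exp (-κ * B / ε) / κ * log (2 / exp (-κ * B / ε)) := by
  set φ := exp (-κ * B / ε)
  have hφsq : exp (-(2 * κ / ε * B)) = φ ^ 2 := by
    rw [sq, ← exp_add]; ring_nf
  have hφ1 : φ ^ 2 ≤ 1 := hφsq ▸ exp_le_one_iff.2 (by simp only [neg_nonpos]; positivity)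
  rw [intervalIntegral.integral_const_mul,
    intervalIntegral.integral_comp_sub_left (fun w => (√(1 - exp (-(2 * κ / ε * w))))⁻¹),
    sub_self, sub_zero, integral_inv_sqrt_one_sub_exp_neg (by positivity) hB, hφsq]
  calc φ / ε * ((log (1 + √(1 - φ ^ 2)) - log (1 - √(1 - φ ^ 2))) / (2 * κ / ε))
      ≤ φ / ε * (2 * log (2 / φ) / (2 * κ / ε)) := by
        gcongr
        exact log_one_add_sub_log_one_sub_le (exp_pos _) (sqrt_nonneg _)
          (sq_sqrt (by linarith))
    _ = φ / κ * log (2 / φ) := by field_simp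

theorem stmt13_general (s t κ ε : ℝ) (hst : s ≤ t) (hκ : 0 < κ) (hε : 0 < ε)
    (a : ℝ → ℝ) (hanneg : ∀ u ∈ Set.Icc s t, 0 ≤ a u)
    (hint : IntervalIntegrable a volume s t) :
    (∫ u in s..t, (a u / ε) * Real.exp (-κ * (∫ r in s..u, a r) / ε) *
        (Real.exp (-κ * (∫ r in u..t, a r) / ε)
          / Real.sqrt (1 - Real.exp (-2 * κ * (∫ r in u..t, a r) / ε))))
      ≤ (Real.exp (-κ * (∫ r in s..t, a r) / ε) / κ)
          * Real.log (2 / Real.exp (-κ * (∫ r in s..t, a r) / ε))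
    ∧ (Real.exp (-κ * (∫ r in s..t, a r) / ε) / κ)
          * Real.log (2 / Real.exp (-κ * (∫ r in s..t, a r) / ε))
      ≤ (1 / κ + (∫ r in s..t, a r) / ε)
          * Real.exp (-κ * (∫ r in s..t, a r) / ε) := by
  set B := ∫ r in s..t, a r
  refine ⟨?_, exp_div_mul_log_two_div_exp_le hκ B ε⟩
  have ha : 0 ≤ᵐ[volume.restrict (Ioc s t)] a :=
    ae_restrict_of_forall_mem measurableSet_Ioc fun u hu => hanneg u (Ioc_subset_Icc_self hu)
  have hsplit : ∀ u ∈ Icc s t, ∫ r in u..t, a r = B - ∫ r in s..u, a r := fun u hu =>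
    (intervalIntegral.integral_interval_sub_left hint
      (hint.mono_set (uIcc_subset_uIcc left_mem_uIcc (mem_uIcc_of_le hu.1 hu.2)))).symm
  calc _ = ∫ u in s..t, a u * (exp (-κ * B / ε) / ε *
        (√(1 - exp (-(2 * κ / ε * (B - ∫ r in s..u, a r)))))⁻¹) := by
        refine intervalIntegral.integral_congr fun u hu => ?_
        rw [uIcc_of_le hst] at hu
        simp only [hsplit u hu]
        rw [show -κ * B / ε = -κ * (∫ r in s..u, a r) / ε + -κ * (B - ∫ r in s..u, a r) / ε by
          ring, exp_add]
        ring_nf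
    _ = ∫ v in 0..B, exp (-κ * B / ε) / ε * (√(1 - exp (-(2 * κ / ε * (B - v)))))⁻¹ :=
        integral_mul_comp_primitive hst ha hint
          (G := fun v => exp (-κ * B / ε) / ε * (√(1 - exp (-(2 * κ / ε * (B - v)))))⁻¹)
          (by fun_prop)
    _ ≤ _ := integral_exp_div_mul_inv_sqrt_le hκ hε (intervalIntegral.integral_nonneg hst hanneg)

/-- Estimate (5.48):
`∫_s^t (a(u)/ε) e^{-κα(u,s)/ε} g(t,u) du ≤ (φ/κ) log(2/φ)
  ≤ (1/κ + α(t,s)/ε) e^{-κα(t,s)/ε}`. -/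
theorem stmt13 (s t κ ε : ℝ) (hst : s ≤ t) (hκ : 0 < κ) (hε : 0 < ε)
    (a : ℝ → ℝ) (hanneg : ∀ u ∈ Set.Icc s t, 0 ≤ a u)
    (hint : IntervalIntegrable a volume s t)
    (hα : 0 < ∫ r in s..t, a r) :
    (∫ u in s..t, (a u / ε) * Real.exp (-κ * (∫ r in s..u, a r) / ε) *
        (Real.exp (-κ * (∫ r in u..t, a r) / ε)
          / Real.sqrt (1 - Real.exp (-2 * κ * (∫ r in u..t, a r) / ε))))
      ≤ (Real.exp (-κ * (∫ r in s..t, a r) / ε) / κ)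
          * Real.log (2 / Real.exp (-κ * (∫ r in s..t, a r) / ε))
    ∧ (Real.exp (-κ * (∫ r in s..t, a r) / ε) / κ)
          * Real.log (2 / Real.exp (-κ * (∫ r in s..t, a r) / ε))
      ≤ (1 / κ + (∫ r in s..t, a r) / ε)
          * Real.exp (-κ * (∫ r in s..t, a r) / ε) :=
  stmt13_general s t κ ε hst hκ hε a hanneg hint
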